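/- If A is not a separable matrix (A ∉ 𝒮^{p,q} while A lies in the Kronecker span 𝒦^{p,q}), then there exists a bi-quadratic form B(x,y) that is nonnegative for all x ∈ ℝᵖ, y ∈ ℝ^q and whose associated matrix satisfies ⟨B, A⟩ < 0. Moreover, for small enough ε > 0, the form B₂(x,y) = B(x,y) + ε(xᵀx)(yᵀy) is strictly positive on the bi-sphere and still satisfies ⟨B₂, A⟩ < 0. -/

import Mathlib

open Matrix Kronecker

/-- A matrix is separable if it is a finite sum of Kronecker products of PSD matrices. -/
def SeparableMatrix (p q : ℕ) (A : Matrix (Fin p × Fin q) (Fin p × Fin q) ℝ) : Prop :=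
  ∃ (L : ℕ) (B : Fin L → Matrix (Fin p) (Fin p) ℝ)
    (C : Fin L → Matrix (Fin q) (Fin q) ℝ),
    (∀ j, (B j).PosSemidef) ∧ (∀ j, (C j).PosSemidef) ∧
      A = ∑ j : Fin L, (B j) ⊗ₖ (C j)

/-- The bi-quadratic form `B(x,y) = Σ b_{ijkl} x_i y_j x_k y_l`. -/
def biQuad {p q : ℕ} (b : Fin p → Fin q → Fin p → Fin q → ℝ)
    (x : Fin p → ℝ) (y : Fin q → ℝ) : ℝ :=
  ∑ i, ∑ j, ∑ k, ∑ l, b i j k l * x i * y j * x k * y l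

/-- The pairing `⟨B, A⟩` of a bi-quadratic form's coefficients with a matrix `A`,
so that `⟨B, (uuᵀ)⊗(vvᵀ)⟩ = B(u,v)`. -/
def biPairing {p q : ℕ} (b : Fin p → Fin q → Fin p → Fin q → ℝ)
    (A : Matrix (Fin p × Fin q) (Fin p × Fin q) ℝ) : ℝ :=
  ∑ i, ∑ j, ∑ k, ∑ l, b i j k l * A (i, j) (k, l)

/-!
The matrices `t • M` with `t ≥ 0` and `M` in the convex hull of the pure product states
`(u uᵀ) ⊗ (v vᵀ)`, `uᵀu = vᵀv = 1`, form a cone of separable matrices. It is closed: the hull is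
compact by Carathéodory's theorem, and the trace, which is `1` on the hull, bounds the scale `t`.
A non-separable `A` lies outside this cone, so Farkas' lemma gives a linear functional `f`,
nonnegative on the cone, with `f A < 0`; its values `f (single (i, j) (k, l) 1)` are the
coefficients of `B`. Finally `ε (xᵀx) (yᵀy)` shifts the pairing with `A` by `ε · trace A`, which
keeps it negative for small `ε`.
-/

open Pointwise

theorem IsCompact.convexHull {E : Type*} [AddCommGroup E] [Module ℝ E] [TopologicalSpace E]
    [IsTopologicalAddGroup E] [ContinuousSMul ℝ E] [FiniteDimensional ℝ E] {s : Set E}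
    (hs : IsCompact s) : IsCompact (_root_.convexHull ℝ s) := by
  classical
  rcases s.eq_empty_or_nonempty with rfl | ⟨z₀, hz₀⟩
  · simp
  set n := Module.finrank ℝ E + 1
  suffices h : _root_.convexHull ℝ s =
      (fun wz : (Fin n → ℝ) × (Fin n → E) => ∑ i, wz.1 i • wz.2 i) ''
        (stdSimplex ℝ (Fin n) ×ˢ Set.univ.pi fun _ => s) by
    rw [h]
    exact ((isCompact_stdSimplex _ _).prod (isCompact_univ_pi fun _ => hs)).image (by fun_prop)
  refine Set.Subset.antisymm (fun x hx => ?_) ?_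
  · -- Carathéodory: at most `n` affinely independent points of `s` suffice; pad with zero weights.
    obtain ⟨ι, _, z, w, hzs, hz, hw₀, hw₁, rfl⟩ := eq_pos_convex_span_of_mem_convexHull hx
    obtain ⟨e⟩ : Nonempty (ι ↪ Fin n) := Function.Embedding.nonempty_of_card_le <| by
      simpa [n] using hz.card_le_finrank_succ.trans (by simp [Submodule.finrank_le])
    refine ⟨(Function.extend e w 0, Function.extend e z fun _ => z₀),
      ⟨⟨fun i => ?_, ?_⟩, fun i _ => ?_⟩, ?_⟩
    · by_cases hi : i ∈ Set.range e
      · obtain ⟨j, rfl⟩ := hi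
        simpa [e.injective.extend_apply] using (hw₀ j).le
      · simp [Function.extend_apply' (f := e) _ _ _ hi]
    · rw [← hw₁]
      refine (Fintype.sum_of_injective e e.injective w _ (fun i hi => ?_) fun j => ?_).symm
      · exact Function.extend_apply' (f := e) _ _ _ hi
      · exact (e.injective.extend_apply _ _ _).symm
    · by_cases hi : i ∈ Set.range e
      · obtain ⟨j, rfl⟩ := hi
        simpa [e.injective.extend_apply] using hzs (Set.mem_range_self j)
      · simpa [Function.extend_apply' (f := e) _ _ _ hi] using hz₀
    · refine (Fintype.sum_of_injective e e.injective _ _ (fun i hi => ?_) fun j => ?_).symm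
      · simp [Function.extend_apply' (f := e) _ _ _ hi]
      · simp [e.injective.extend_apply]
  · rintro _ ⟨⟨w, z⟩, ⟨⟨hw₀, hw₁⟩, hz⟩, rfl⟩
    exact (convex_convexHull ℝ s).sum_mem (fun i _ => hw₀ i) hw₁
      fun i _ => subset_convexHull ℝ s (hz i trivial)

section ConeOverConvex

variable {E : Type*} [AddCommGroup E] [Module ℝ E]

theorem Convex.add_mem_Ici_smul {H : Set E} (hH : Convex ℝ H) {x y : E}
    (hx : x ∈ Set.Ici (0 : ℝ) • H) (hy : y ∈ Set.Ici (0 : ℝ) • H) :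
    x + y ∈ Set.Ici (0 : ℝ) • H := by
  obtain ⟨a, ha, c, hc, rfl⟩ := hx
  obtain ⟨b, hb, d, hd, rfl⟩ := hy
  have hsum : a • c + b • d ∈ (a + b) • H := by
    rw [hH.add_smul ha hb]
    exact Set.add_mem_add (Set.smul_mem_smul_set hc) (Set.smul_mem_smul_set hd)
  obtain ⟨e, he, hsum⟩ := hsum
  exact ⟨a + b, Set.mem_Ici.2 (add_nonneg ha hb), e, he, hsum⟩

variable [TopologicalSpace E] [ContinuousSMul ℝ E] [T2Space E]

theorem isClosed_Ici_smul {H : Set E} (hH : IsCompact H) (φ : E →L[ℝ] ℝ)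
    (hφ : ∀ c ∈ H, 1 ≤ φ c) : IsClosed (Set.Ici (0 : ℝ) • H) := by
  refine isClosed_of_closure_subset fun z hz => ?_
  -- Near `z`, the cone agrees with the compact set `[0, R] • H`, since `t ≤ φ (t • c)`.
  set R := φ z + 1
  have hbounded : {x | φ x < R} ∩ Set.Ici (0 : ℝ) • H ⊆ Set.Icc 0 R • H := by
    rintro _ ⟨hlt, t, ht, c, hc, rfl⟩
    refine ⟨t, ⟨ht, ?_⟩, c, hc, rfl⟩
    simp only [Set.mem_ofPred_eq, map_smul, smul_eq_mul] at hlt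
    nlinarith [hφ c hc, Set.mem_Ici.1 ht]
  have hzR : z ∈ closure ({x | φ x < R} ∩ Set.Ici (0 : ℝ) • H) :=
    (isOpen_lt φ.continuous continuous_const).inter_closure
      ⟨show φ z < φ z + 1 from lt_add_one _, hz⟩
  exact Set.smul_subset_smul_right Set.Icc_subset_Ici_self
    ((isCompact_Icc.smul_set hH).isClosed.closure_subset_iff.2 hbounded hzR)

theorem exists_nonneg_of_notMem_Ici_smul [IsTopologicalAddGroup E] [LocallyConvexSpace ℝ E]
    {H : Set E} (hconv : Convex ℝ H) (hcomp : IsCompact H) (hne : H.Nonempty) (φ : E →L[ℝ] ℝ)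
    (hφ : ∀ c ∈ H, 1 ≤ φ c) {x : E} (hx : x ∉ Set.Ici (0 : ℝ) • H) :
    ∃ f : E →L[ℝ] ℝ, (∀ c ∈ H, 0 ≤ f c) ∧ f x < 0 := by
  let K : ProperCone ℝ E :=
    { carrier := Set.Ici 0 • H
      add_mem' := hconv.add_mem_Ici_smul
      zero_mem' := ⟨0, Set.self_mem_Ici, hne.some, hne.some_mem, zero_smul _ _⟩
      smul_mem' := fun a _ ⟨t, ht, c, hc, h⟩ =>
        ⟨a * t, mul_nonneg a.2 ht, c, hc, by rw [← h]; exact mul_smul (a : ℝ) t c⟩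
      isClosed' := isClosed_Ici_smul hcomp φ hφ }
  obtain ⟨f, hfK, hfx⟩ := K.hyperplane_separation_point hx
  exact ⟨f, fun c hc => hfK c ⟨1, Set.mem_Ici.2 zero_le_one, c, hc, one_smul _ _⟩, hfx⟩

end ConeOverConvex

instance {m n : Type*} : LocallyConvexSpace ℝ (Matrix m n ℝ) :=
  inferInstanceAs (LocallyConvexSpace ℝ (m → n → ℝ))

theorem isCompact_setOf_dotProduct_self_eq_one (ι : Type*) [Fintype ι] :
    IsCompact {u : ι → ℝ | u ⬝ᵥ u = 1} := by
  refine (isCompact_univ_pi fun _ => isCompact_Icc (a := -1) (b := 1)).of_isClosed_subset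
    (isClosed_eq (by fun_prop) continuous_const) fun u hu i _ => ?_
  have hi : u i * u i ≤ 1 :=
    hu ▸ Finset.single_le_sum (f := fun j => u j * u j) (fun j _ => mul_self_nonneg (u j))
      (Finset.mem_univ i)
  exact abs_le.1 (abs_le_one_iff_mul_self_le_one.2 hi)

theorem exists_dotProduct_self_eq_one_smul {ι : Type*} [Fintype ι] {x : ι → ℝ} (hx : x ≠ 0) :
    ∃ c : ℝ, ∃ u : ι → ℝ, u ⬝ᵥ u = 1 ∧ x = c • u := by
  have hnn : 0 ≤ x ⬝ᵥ x := by simpa using dotProduct_star_self_nonneg x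
  have hpos : 0 < √(x ⬝ᵥ x) :=
    Real.sqrt_pos.2 (hnn.lt_of_ne' (dotProduct_self_eq_zero.not.2 hx))
  refine ⟨√(x ⬝ᵥ x), (√(x ⬝ᵥ x))⁻¹ • x, ?_, (smul_inv_smul₀ hpos.ne' x).symm⟩
  rw [smul_dotProduct, dotProduct_smul, smul_smul, smul_eq_mul, ← mul_inv,
    Real.mul_self_sqrt hnn, inv_mul_cancel₀ (Real.sqrt_pos.1 hpos).ne']

namespace SeparableMatrix

variable {p q : ℕ} {A A' : Matrix (Fin p × Fin q) (Fin p × Fin q) ℝ}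

theorem zero : SeparableMatrix p q 0 :=
  ⟨0, finZeroElim, finZeroElim, finZeroElim, finZeroElim, by simp⟩

theorem add (hA : SeparableMatrix p q A) (hA' : SeparableMatrix p q A') :
    SeparableMatrix p q (A + A') := by
  obtain ⟨L, B, C, hB, hC, rfl⟩ := hA
  obtain ⟨L', B', C', hB', hC', rfl⟩ := hA'
  refine ⟨L + L', Fin.append B B', Fin.append C C', Fin.addCases (by simpa) (by simpa),
    Fin.addCases (by simpa) (by simpa), ?_⟩
  simp [Fin.sum_univ_add]

theorem smul {t : ℝ} (ht : 0 ≤ t) (hA : SeparableMatrix p q A) : SeparableMatrix p q (t • A) := by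
  obtain ⟨L, B, C, hB, hC, rfl⟩ := hA
  refine ⟨L, t • B, C, fun j => (hB j).smul ht, hC, ?_⟩
  simp [Finset.smul_sum, smul_kronecker]

theorem kronecker_vecMulVec (u : Fin p → ℝ) (v : Fin q → ℝ) :
    SeparableMatrix p q (vecMulVec u u ⊗ₖ vecMulVec v v) :=
  ⟨1, fun _ => vecMulVec u u, fun _ => vecMulVec v v,
    fun _ => by simpa using posSemidef_vecMulVec_self_star u,
    fun _ => by simpa using posSemidef_vecMulVec_self_star v, by simp⟩

end SeparableMatrix

theorem convex_setOf_separableMatrix (p q : ℕ) : Convex ℝ {A | SeparableMatrix p q A} :=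
  fun _ hA _ hA' _ _ ha hb _ => (hA.smul ha).add (hA'.smul hb)

def pureProductStates (p q : ℕ) : Set (Matrix (Fin p × Fin q) (Fin p × Fin q) ℝ) :=
  (fun uv : (Fin p → ℝ) × (Fin q → ℝ) => vecMulVec uv.1 uv.1 ⊗ₖ vecMulVec uv.2 uv.2) ''
    ({u | u ⬝ᵥ u = 1} ×ˢ {v | v ⬝ᵥ v = 1})

section PureProductStates

variable {p q : ℕ}

theorem pureProductStates_nonempty (i : Fin p) (j : Fin q) : (pureProductStates p q).Nonempty :=
  ⟨_, (Pi.single i 1, Pi.single j 1), ⟨by simp, by simp⟩, rfl⟩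

theorem isCompact_pureProductStates (p q : ℕ) : IsCompact (pureProductStates p q) := by
  refine ((isCompact_setOf_dotProduct_self_eq_one _).prod
    (isCompact_setOf_dotProduct_self_eq_one _)).image (continuous_matrix fun _ _ => ?_)
  simp only [kroneckerMap_apply, vecMulVec_apply]
  fun_prop

theorem trace_eq_one_of_mem_pureProductStates {M : Matrix (Fin p × Fin q) (Fin p × Fin q) ℝ}
    (hM : M ∈ pureProductStates p q) : M.trace = 1 := by
  obtain ⟨⟨u, v⟩, ⟨hu, hv⟩, rfl⟩ := hM
  simp_all [trace_kronecker, trace_vecMulVec]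

theorem one_le_trace_of_mem_convexHull {M : Matrix (Fin p × Fin q) (Fin p × Fin q) ℝ}
    (hM : M ∈ convexHull ℝ (pureProductStates p q)) : 1 ≤ M.trace :=
  convexHull_min (fun _ hN => (trace_eq_one_of_mem_pureProductStates hN).ge)
    (convex_halfSpace_ge (traceLinearMap _ ℝ ℝ).isLinear 1) hM

theorem separableMatrix_of_mem_Ici_smul_convexHull {A : Matrix (Fin p × Fin q) (Fin p × Fin q) ℝ}
    (hA : A ∈ Set.Ici (0 : ℝ) • convexHull ℝ (pureProductStates p q)) : SeparableMatrix p q A := by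
  obtain ⟨t, ht, M, hM, rfl⟩ := hA
  refine SeparableMatrix.smul ht (convexHull_min ?_ (convex_setOf_separableMatrix p q) hM)
  rintro _ ⟨⟨u, v⟩, -, rfl⟩
  exact SeparableMatrix.kronecker_vecMulVec u v

theorem exists_nonneg_pureProductStates_of_not_separableMatrix
    {A : Matrix (Fin p × Fin q) (Fin p × Fin q) ℝ} (hA : ¬ SeparableMatrix p q A) :
    ∃ f : Matrix (Fin p × Fin q) (Fin p × Fin q) ℝ →ₗ[ℝ] ℝ,
      (∀ M ∈ pureProductStates p q, 0 ≤ f M) ∧ f A < 0 := by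
  obtain ⟨⟨i, j⟩, -⟩ : ∃ r s, A r s ≠ 0 := by
    by_contra! h
    exact hA (Matrix.ext h ▸ SeparableMatrix.zero)
  obtain ⟨f, hf, hfA⟩ := exists_nonneg_of_notMem_Ici_smul (convex_convexHull ℝ _)
    (isCompact_pureProductStates p q).convexHull (pureProductStates_nonempty i j).convexHull
    (traceLinearMap _ ℝ ℝ).toContinuousLinearMap (fun _ => one_le_trace_of_mem_convexHull)
    (mt separableMatrix_of_mem_Ici_smul_convexHull hA)
  exact ⟨f, fun M hM => hf M (subset_convexHull ℝ _ hM), hfA⟩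

end PureProductStates

def biCoeffs {p q : ℕ} (f : Matrix (Fin p × Fin q) (Fin p × Fin q) ℝ →ₗ[ℝ] ℝ) :
    Fin p → Fin q → Fin p → Fin q → ℝ :=
  fun i j k l => f (single (i, j) (k, l) 1)

section BiQuadratic

variable {p q : ℕ}

theorem biPairing_biCoeffs (f : Matrix (Fin p × Fin q) (Fin p × Fin q) ℝ →ₗ[ℝ] ℝ)
    (M : Matrix (Fin p × Fin q) (Fin p × Fin q) ℝ) : biPairing (biCoeffs f) M = f M := by
  classical
  conv_rhs => rw [matrix_eq_sum_single M]
  simp only [map_sum, biPairing, biCoeffs, Fintype.sum_prod_type]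
  refine Finset.sum_congr rfl fun i _ => Finset.sum_congr rfl fun j _ =>
    Finset.sum_congr rfl fun k _ => Finset.sum_congr rfl fun l _ => ?_
  rw [show single (i, j) (k, l) (M (i, j) (k, l)) = M (i, j) (k, l) • single (i, j) (k, l) 1 by
    simp [smul_single], map_smul, smul_eq_mul, mul_comm]

theorem biQuad_eq_biPairing (b : Fin p → Fin q → Fin p → Fin q → ℝ) (x : Fin p → ℝ)
    (y : Fin q → ℝ) : biQuad b x y = biPairing b (vecMulVec x x ⊗ₖ vecMulVec y y) := by
  simp only [biQuad, biPairing, kroneckerMap_apply, vecMulVec_apply]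
  refine Finset.sum_congr rfl fun i _ => Finset.sum_congr rfl fun j _ =>
    Finset.sum_congr rfl fun k _ => Finset.sum_congr rfl fun l _ => ?_
  ring

theorem biQuad_biCoeffs_nonneg (f : Matrix (Fin p × Fin q) (Fin p × Fin q) ℝ →ₗ[ℝ] ℝ)
    (hf : ∀ M ∈ pureProductStates p q, 0 ≤ f M) (x : Fin p → ℝ) (y : Fin q → ℝ) :
    0 ≤ biQuad (biCoeffs f) x y := by
  rw [biQuad_eq_biPairing, biPairing_biCoeffs]
  rcases eq_or_ne x 0 with rfl | hx
  · simp
  rcases eq_or_ne y 0 with rfl | hy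
  · simp
  obtain ⟨c, u, hu, rfl⟩ := exists_dotProduct_self_eq_one_smul hx
  obtain ⟨d, v, hv, rfl⟩ := exists_dotProduct_self_eq_one_smul hy
  simp only [smul_vecMulVec, vecMulVec_smul, smul_kronecker, kronecker_smul, map_smul,
    smul_eq_mul]
  rw [← mul_assoc d, ← mul_assoc c]
  exact mul_nonneg (mul_self_nonneg d)
    (mul_nonneg (mul_self_nonneg c) (hf _ ⟨(u, v), ⟨hu, hv⟩, rfl⟩))

end BiQuadratic

theorem exists_pos_forall_add_mul_neg {P : ℝ} (hP : P < 0) (T : ℝ) :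
    ∃ ε₀ : ℝ, 0 < ε₀ ∧ ∀ ε : ℝ, 0 < ε → ε ≤ ε₀ → P + ε * T < 0 := by
  refine ⟨-P / (|T| + 1), div_pos (neg_pos.2 hP) (by positivity), fun ε hε hεε₀ => ?_⟩
  have hT : ε * T ≤ ε * |T| := mul_le_mul_of_nonneg_left (le_abs_self T) hε.le
  have hε₀ : ε * (|T| + 1) ≤ -P := (le_div_iff₀ (by positivity)).1 hεε₀
  linarith

theorem not_separable_strict_separation_general (p q : ℕ)
    (A : Matrix (Fin p × Fin q) (Fin p × Fin q) ℝ)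
    (hsep : ¬ SeparableMatrix p q A) :
    ∃ b : Fin p → Fin q → Fin p → Fin q → ℝ,
      (∀ (x : Fin p → ℝ) (y : Fin q → ℝ), 0 ≤ biQuad b x y) ∧
      biPairing b A < 0 ∧
      ∃ ε₀ : ℝ, 0 < ε₀ ∧ ∀ ε : ℝ, 0 < ε → ε ≤ ε₀ →
        (∀ (x : Fin p → ℝ) (y : Fin q → ℝ), x ⬝ᵥ x = 1 → y ⬝ᵥ y = 1 →
          0 < biQuad b x y + ε * (x ⬝ᵥ x) * (y ⬝ᵥ y)) ∧
        biPairing b A + ε * A.trace < 0 := by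
  obtain ⟨f, hf, hfA⟩ := exists_nonneg_pureProductStates_of_not_separableMatrix hsep
  have hb : ∀ x y, 0 ≤ biQuad (biCoeffs f) x y := biQuad_biCoeffs_nonneg f hf
  have hbA : biPairing (biCoeffs f) A < 0 := by rwa [biPairing_biCoeffs]
  obtain ⟨ε₀, hε₀, hsmall⟩ := exists_pos_forall_add_mul_neg hbA A.trace
  refine ⟨biCoeffs f, hb, hbA, ε₀, hε₀, fun ε hε hεε₀ => ⟨fun x y hx hy => ?_, hsmall ε hε hεε₀⟩⟩
  rw [hx, hy, mul_one, mul_one]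
  exact add_pos_of_nonneg_of_pos (hb x y) hε

/-- If `A` lies in the Kronecker span but is not separable, there is a nonnegative
bi-quadratic form `B` with `⟨B, A⟩ < 0`; moreover for all small enough `ε > 0`, the
form `B₂ = B + ε(xᵀx)(yᵀy)` is strictly positive on the bi-sphere and still satisfies
`⟨B₂, A⟩ = ⟨B, A⟩ + ε·trace(A) < 0`. -/
theorem not_separable_strict_separation (p q : ℕ)
    (A : Matrix (Fin p × Fin q) (Fin p × Fin q) ℝ)
    (hA : A ∈ Submodule.span ℝ
      {M : Matrix (Fin p × Fin q) (Fin p × Fin q) ℝ |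
        ∃ (B : Matrix (Fin p) (Fin p) ℝ) (C : Matrix (Fin q) (Fin q) ℝ),
          B.IsSymm ∧ C.IsSymm ∧ M = B ⊗ₖ C})
    (hsep : ¬ SeparableMatrix p q A) :
    ∃ b : Fin p → Fin q → Fin p → Fin q → ℝ,
      (∀ (x : Fin p → ℝ) (y : Fin q → ℝ), 0 ≤ biQuad b x y) ∧
      biPairing b A < 0 ∧
      ∃ ε₀ : ℝ, 0 < ε₀ ∧ ∀ ε : ℝ, 0 < ε → ε ≤ ε₀ →
        (∀ (x : Fin p → ℝ) (y : Fin q → ℝ), x ⬝ᵥ x = 1 → y ⬝ᵥ y = 1 →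
          0 < biQuad b x y + ε * (x ⬝ᵥ x) * (y ⬝ᵥ y)) ∧
        biPairing b A + ε * A.trace < 0 :=
  not_separable_strict_separation_general p q A hsep
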